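/- For every even integer n ≥ 2 and every integer m with 0 ≤ m ≤ n, one has α(n,m) ≤ 10·n^{1/2}. -/

import Mathlib

open scoped Classical

/-- Number of pairs `(ξ, ξ')` of Boolean vectors such that `ξ₁+⋯+ξ_n = 0` and
`ξ₁+⋯+ξ_m+ξ'_{m+1}+⋯+ξ'_n = 0`, where `true ↦ +1` and `false ↦ −1`. -/
def countBoth (n m : ℕ) : ℕ :=
  (Finset.univ.filter fun ξ : (Fin n → Bool) × (Fin n → Bool) =>
    (∑ i : Fin n, (if ξ.1 i then (1 : ℤ) else -1)) = 0 ∧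
    (∑ i : Fin n, (if (i : ℕ) < m then (if ξ.1 i then (1 : ℤ) else -1)
           else (if ξ.2 i then (1 : ℤ) else -1))) = 0).card

/-- Number of Boolean vectors `ξ` with `ξ₁+⋯+ξ_n = 0`, where `true ↦ +1`, `false ↦ −1`. -/
def countZero (n : ℕ) : ℕ :=
  (Finset.univ.filter fun ξ : Fin n → Bool =>
    (∑ i : Fin n, (if ξ i then (1 : ℤ) else -1)) = 0).card

/-- `α(n,m) = P[ξ₁+⋯+ξ_n = 0 ∧ ξ₁+⋯+ξ_m+ξ'_{m+1}+⋯+ξ'_n = 0] / P[ξ₁+⋯+ξ_n = 0]²`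
for i.i.d. Rademacher random variables `ξᵢ, ξ'ᵢ`. -/
noncomputable def alphaCorr (n m : ℕ) : ℝ :=
  ((countBoth n m : ℝ) / 2 ^ (2 * n)) / ((countZero n : ℝ) / 2 ^ n) ^ 2

/-!
Dropping the constraint involving `ξ'` gives `P[both] ≤ P[ξ₁+⋯+ξₙ = 0]`, so
`α(n,m) ≤ 1 / P[ξ₁+⋯+ξₙ = 0] = 2ⁿ / C(n, n/2)`. For `n = 2k` the central binomial coefficient
satisfies `16ᵏ ≤ (4k+1) C(2k,k)²`, by induction on `k` through
`(k+1) C(2k+2,k+1) = 2(2k+1) C(2k,k)`; hence `α(n,m) ≤ √(2n+1) ≤ 10 √n`.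
-/

open Finset

theorem sum_ite_one_neg_one_eq_two_mul_card_sub {α : Type*} [Fintype α] (ξ : α → Bool) :
    ∑ i, (if ξ i then (1 : ℤ) else -1) = 2 * #{i | ξ i} - Fintype.card α := by
  have h : ∀ b : Bool, (if b then (1 : ℤ) else -1) = 2 * (if b then 1 else 0) - 1 := by
    intro b; cases b <;> rfl
  simp only [h, sum_sub_distrib, ← mul_sum, sum_boole, sum_const, card_univ]
  simp

theorem card_filter_card_true_eq_choose {α : Type*} [Fintype α] (k : ℕ) :
    #{ξ : α → Bool | #{i | ξ i} = k} = (Fintype.card α).choose k := by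
  rw [← card_univ, ← card_powersetCard]
  refine card_nbij' (fun ξ => ({i | ξ i} : Finset α)) (fun s i => decide (i ∈ s)) ?_ ?_ ?_ ?_
  · intro ξ; simp
  · intro s; simp +contextual [mem_powersetCard]
  · intro ξ _; ext i; simp
  · intro s _; ext i; simp

theorem countZero_two_mul (k : ℕ) : countZero (2 * k) = k.centralBinom := by
  have h := card_filter_card_true_eq_choose (α := Fin (2 * k)) k
  rw [Fintype.card_fin, ← Nat.centralBinom_eq_two_mul_choose] at h
  rw [countZero, ← h]
  congr 1
  ext ξ
  simp only [mem_filter, mem_univ, true_and, sum_ite_one_neg_one_eq_two_mul_card_sub,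
    Fintype.card_fin]
  omega

theorem countBoth_le (n m : ℕ) : countBoth n m ≤ 2 ^ n * countZero n := by
  calc countBoth n m
      ≤ #(({ξ : Fin n → Bool | ∑ i, (if ξ i then (1 : ℤ) else -1) = 0} : Finset _) ×ˢ univ) :=
        card_le_card fun ξ hξ => by simp_all
    _ = 2 ^ n * countZero n := by simp [countZero, mul_comm]

theorem alphaCorr_le_two_pow_div_countZero (n m : ℕ) :
    alphaCorr n m ≤ 2 ^ n / countZero n := by
  have hB : (countBoth n m : ℝ) ≤ 2 ^ n * countZero n := by exact_mod_cast countBoth_le n m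
  rcases eq_or_ne (countZero n : ℝ) 0 with hZ | hZ
  · simp [alphaCorr, hZ]
  calc alphaCorr n m = countBoth n m / (countZero n : ℝ) ^ 2 := by
        rw [alphaCorr, mul_comm 2 n, pow_mul]; field_simp
    _ ≤ 2 ^ n * countZero n / (countZero n : ℝ) ^ 2 := by gcongr
    _ = 2 ^ n / countZero n := by field_simp

theorem Nat.four_pow_sq_le_mul_centralBinom_sq (k : ℕ) :
    (4 ^ k) ^ 2 ≤ (4 * k + 1) * k.centralBinom ^ 2 := by
  induction k with
  | zero => simp
  | succ k ih =>
    have hrec := Nat.succ_mul_centralBinom_succ k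
    refine Nat.le_of_mul_le_mul_left ?_ (by positivity : 0 < (k + 1) ^ 2)
    calc (k + 1) ^ 2 * (4 ^ (k + 1)) ^ 2 = 16 * (k + 1) ^ 2 * (4 ^ k) ^ 2 := by ring
      _ ≤ 16 * (k + 1) ^ 2 * ((4 * k + 1) * k.centralBinom ^ 2) := by gcongr
      _ ≤ (4 * k + 5) * (2 * (2 * k + 1)) ^ 2 * k.centralBinom ^ 2 := by
        rw [← mul_assoc]
        -- (4k+5)(2k+1)² − 4(k+1)²(4k+1) = 1
        exact Nat.mul_le_mul_right _ (by nlinarith)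
      _ = (4 * (k + 1) + 1) * ((k + 1) * (k + 1).centralBinom) ^ 2 := by rw [hrec]; ring
      _ = (k + 1) ^ 2 * ((4 * (k + 1) + 1) * (k + 1).centralBinom ^ 2) := by ring

theorem four_pow_div_centralBinom_le_sqrt (k : ℕ) :
    (4 : ℝ) ^ k / k.centralBinom ≤ √(4 * k + 1) := by
  have hc : (0 : ℝ) < k.centralBinom := by exact_mod_cast k.centralBinom_pos
  rw [div_le_iff₀ hc, ← Real.sqrt_sq hc.le, ← Real.sqrt_mul (by positivity)]
  apply Real.le_sqrt_of_sq_le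
  exact_mod_cast k.four_pow_sq_le_mul_centralBinom_sq

theorem alpha_le_ten_sqrt_general (n : ℕ) (hn : Even n) (hn2 : 2 ≤ n) (m : ℕ) :
    alphaCorr n m ≤ 10 * Real.sqrt n := by
  obtain ⟨k, rfl⟩ := hn
  rw [← two_mul] at hn2 ⊢
  have hk : (1 : ℝ) ≤ k := by exact_mod_cast (by omega : 1 ≤ k)
  calc alphaCorr (2 * k) m ≤ 2 ^ (2 * k) / countZero (2 * k) :=
        alphaCorr_le_two_pow_div_countZero _ m
    _ = 4 ^ k / k.centralBinom := by rw [countZero_two_mul, pow_mul]; norm_num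
    _ ≤ √(4 * k + 1) := four_pow_div_centralBinom_le_sqrt k
    _ ≤ √(100 * (2 * k : ℕ)) := Real.sqrt_le_sqrt (by push_cast; linarith)
    _ = 10 * √(2 * k : ℕ) := by
        rw [Real.sqrt_mul (by norm_num), show (100 : ℝ) = 10 ^ 2 by norm_num,
          Real.sqrt_sq (by norm_num)]

/-- For every even `n ≥ 2` and `0 ≤ m ≤ n`, `α(n,m) ≤ 10 √n`. -/
theorem alpha_le_ten_sqrt (n : ℕ) (hn : Even n) (hn2 : 2 ≤ n) (m : ℕ) (hm : m ≤ n) :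
    alphaCorr n m ≤ 10 * Real.sqrt n :=
  alpha_le_ten_sqrt_general n hn hn2 m
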